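/- arXiv:1809.08690 — 2 statements merged into one kernel-verified Lean document; each statement's English description precedes it below -/
import Mathlib

section
/- Let α, γ be positive irrational numbers with 2α + γ = 1. Let B̃_β = {⌊n/α⌋ - 1 : n ≥ 1} and B̃_γ = ℕ \ (B_α ∪ B̃_β), with increasing enumeration (c̃(n)). Then for all positive integers n, c(n) - c̃(n) ∈ {0, 1}, where c(n) = ⌊n/γ⌋. -/
open scoped Classical

def beatty (α : ℝ) : Set ℤ := {m | ∃ n : ℕ, 0 < n ∧ m = ⌊(n : ℝ) / α⌋}

noncomputable def countLe (S : Set ℤ) (m : ℤ) : ℕ :=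
  ((Finset.Icc 1 m).filter (fun k => k ∈ S)).card

/-!
For irrational `α`, an integer `m > 0` lies in `B_α` exactly when `⌊mα⌋ < ⌊(m+1)α⌋`, and `m ∈ B̃_β`
exactly when `m + 1 ∈ B_α`. Hence `m ∈ B̃_γ` iff `⌊(m+2)α⌋ = ⌊mα⌋`, and as `2α < 1` the
difference `⌊(k+2)α⌋ - ⌊kα⌋` is `0` or `1`: it is one minus the indicator of `B̃_γ` at `k`,
and counting telescopes to `#(B̃_γ ∩ [1, m]) = m - ⌊(m+1)α⌋ - ⌊(m+2)α⌋`. For `m = c̃(n)` all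
three floors equal `t = ⌊mα⌋`, so `n = m - 2t = mγ + 2{mα}` with `0 ≤ 2{mα} < 2γ`; thus
`m ≤ n/γ < m + 2`.
-/

lemma countLe_nonpos (S : Set ℤ) {m : ℤ} (hm : m ≤ 0) : countLe S m = 0 := by
  simp [countLe, Finset.Icc_eq_empty_of_lt (show m < 1 by omega)]

lemma countLe_add_one (S : Set ℤ) {m : ℤ} (hm : 0 ≤ m) :
    countLe S (m + 1) = countLe S m + if m + 1 ∈ S then 1 else 0 := by
  rw [countLe, countLe, ← Finset.insert_Icc_right_eq_Icc_add_one (by omega), Finset.filter_insert]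
  split_ifs with hS
  · exact Finset.card_insert_of_notMem (by simp)
  · rfl

lemma countLe_apply_of_enumeration {S : Set ℤ} (hS : ∀ x ∈ S, 0 < x) {c : ℕ → ℤ}
    (hmono : StrictMonoOn c {n | 0 < n}) (hmaps : Set.MapsTo c {n | 0 < n} S)
    (hsurj : S ⊆ c '' {n | 0 < n}) {n : ℕ} (hn : 0 < n) :
    countLe S (c n) = n := by
  have himage : (Finset.Icc 1 (c n)).filter (· ∈ S) = (Finset.Icc 1 n).image c := by
    ext x
    simp only [Finset.mem_filter, Finset.mem_Icc, Finset.mem_image]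
    constructor
    · rintro ⟨⟨-, hxn⟩, hxS⟩
      obtain ⟨k, hk, rfl⟩ := hsurj hxS
      exact ⟨k, ⟨hk, (hmono.le_iff_le hk hn).1 hxn⟩, rfl⟩
    · rintro ⟨k, ⟨hk, hkn⟩, rfl⟩
      exact ⟨⟨hS _ (hmaps hk), (hmono.le_iff_le hk hn).2 hkn⟩, hmaps hk⟩
  rw [countLe, himage, Finset.card_image_of_injOn, Nat.card_Icc, Nat.add_sub_cancel]
  exact hmono.injOn.mono fun k hk => (Finset.mem_Icc.1 hk).1

lemma floor_le_floor_add_one_of_lt_one {x δ : ℝ} (hδ : δ < 1) : ⌊x + δ⌋ ≤ ⌊x⌋ + 1 := by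
  have : ⌊x + δ⌋ < ⌊x⌋ + 2 := by
    rw [Int.floor_lt]
    push_cast
    linarith [Int.lt_floor_add_one x]
  omega

section Beatty

variable {α : ℝ}

lemma mem_beatty_iff_floor_lt (ha : 0 < α) (hα : Irrational α) {m : ℤ} (hm : 0 < m) :
    m ∈ beatty α ↔ ⌊(m : ℝ) * α⌋ < ⌊((m : ℝ) + 1) * α⌋ := by
  have hirr : ∀ j : ℤ, (m : ℝ) * α ≠ j := (hα.intCast_mul hm.ne').ne_int
  have hirr1 : ∀ j : ℤ, ((m : ℝ) + 1) * α ≠ j := by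
    simpa using (hα.intCast_mul (show m + 1 ≠ 0 by omega)).ne_int
  rw [Int.floor_lt]
  constructor
  · rintro ⟨n, -, hmn⟩
    obtain ⟨hlo, hhi⟩ := Int.floor_eq_iff.1 hmn.symm
    rw [le_div_iff₀ ha] at hlo
    rw [div_lt_iff₀ ha] at hhi
    have hn : (n : ℤ) ≤ ⌊((m : ℝ) + 1) * α⌋ := Int.le_floor.2 (by exact_mod_cast hhi.le)
    exact (lt_of_le_of_ne hlo (by exact_mod_cast hirr n)).trans_le (by exact_mod_cast hn)
  · intro h
    set j := ⌊((m : ℝ) + 1) * α⌋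
    have hj : (j : ℝ) < ((m : ℝ) + 1) * α := (Int.floor_le _).lt_of_ne (hirr1 j).symm
    have hj0 : 0 < j := by
      have : (0 : ℝ) < j := lt_of_le_of_lt (by positivity) h
      exact_mod_cast this
    obtain ⟨n, hn⟩ := Int.eq_ofNat_of_zero_le hj0.le
    refine ⟨n, by omega, ?_⟩
    rw [eq_comm, Int.floor_eq_iff, le_div_iff₀ ha, div_lt_iff₀ ha,
      show (n : ℝ) = j by exact_mod_cast hn.symm]
    exact ⟨h.le, hj⟩

/-- The paper's `B̃_γ`, using `m ∈ B̃_β ↔ m + 1 ∈ B_α`. -/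
def beattyGap (α : ℝ) : Set ℤ := {m | 0 < m ∧ m ∉ beatty α ∧ m + 1 ∉ beatty α}

lemma mem_beattyGap_iff (ha : 0 < α) (hα : Irrational α) {m : ℤ} :
    m ∈ beattyGap α ↔ 0 < m ∧ ⌊((m : ℝ) + 2) * α⌋ = ⌊(m : ℝ) * α⌋ := by
  have mono : ∀ x y : ℝ, x ≤ y → ⌊x * α⌋ ≤ ⌊y * α⌋ := fun x y hxy =>
    Int.floor_mono (mul_le_mul_of_nonneg_right hxy ha.le)
  have h01 := mono m (m + 1) (by linarith)
  have h12 := mono (m + 1) (m + 2) (by linarith)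
  refine ⟨fun ⟨hm, h0, h1⟩ => ⟨hm, ?_⟩, fun ⟨hm, h⟩ => ⟨hm, ?_, ?_⟩⟩
  · rw [mem_beatty_iff_floor_lt ha hα hm] at h0
    rw [mem_beatty_iff_floor_lt ha hα (by omega)] at h1
    push_cast at h1
    rw [add_assoc, one_add_one_eq_two] at h1
    omega
  · rw [mem_beatty_iff_floor_lt ha hα hm]
    omega
  · rw [mem_beatty_iff_floor_lt ha hα (by omega)]
    push_cast
    rw [add_assoc, one_add_one_eq_two]
    omega

lemma beattyGap_indicator (ha : 0 < α) (ha2 : 2 * α < 1) (hα : Irrational α) {m : ℤ}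
    (hm : 0 < m) :
    ((if m ∈ beattyGap α then 1 else 0 : ℕ) : ℤ) =
      1 - (⌊((m : ℝ) + 2) * α⌋ - ⌊(m : ℝ) * α⌋) := by
  have hlo : ⌊(m : ℝ) * α⌋ ≤ ⌊((m : ℝ) + 2) * α⌋ := Int.floor_mono (by nlinarith)
  have hhi : ⌊((m : ℝ) + 2) * α⌋ ≤ ⌊(m : ℝ) * α⌋ + 1 := by
    rw [add_mul]
    exact floor_le_floor_add_one_of_lt_one ha2
  split_ifs with h
  · rw [(mem_beattyGap_iff ha hα).1 h |>.2]
    simp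
  · have : ⌊((m : ℝ) + 2) * α⌋ ≠ ⌊(m : ℝ) * α⌋ := fun h' =>
      h ((mem_beattyGap_iff ha hα).2 ⟨hm, h'⟩)
    push_cast
    omega

lemma countLe_beattyGap (ha : 0 < α) (ha2 : 2 * α < 1) (hα : Irrational α) {m : ℤ}
    (hm : 0 ≤ m) :
    (countLe (beattyGap α) m : ℤ) = m - ⌊((m : ℝ) + 1) * α⌋ - ⌊((m : ℝ) + 2) * α⌋ := by
  induction m, hm using Int.leInduction with
  | base =>
    simp only [countLe_nonpos _ le_rfl, Int.cast_zero, zero_add, one_mul]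
    rw [Int.floor_eq_zero_iff.2 ⟨ha.le, by linarith⟩, Int.floor_eq_zero_iff.2 ⟨by positivity, ha2⟩]
    rfl
  | succ m hm ih =>
    rw [countLe_add_one _ hm, Nat.cast_add, ih, beattyGap_indicator ha ha2 hα (by omega)]
    push_cast
    ring_nf

lemma countLe_beattyGap_of_mem (ha : 0 < α) (ha2 : 2 * α < 1) (hα : Irrational α) {m : ℤ}
    (hm : m ∈ beattyGap α) :
    (countLe (beattyGap α) m : ℤ) = m - 2 * ⌊(m : ℝ) * α⌋ := by
  obtain ⟨hm0, h⟩ := (mem_beattyGap_iff ha hα).1 hm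
  have h01 : ⌊(m : ℝ) * α⌋ ≤ ⌊((m : ℝ) + 1) * α⌋ := Int.floor_mono (by nlinarith)
  have h12 : ⌊((m : ℝ) + 1) * α⌋ ≤ ⌊((m : ℝ) + 2) * α⌋ := Int.floor_mono (by nlinarith)
  rw [countLe_beattyGap ha ha2 hα hm0.le]
  omega

lemma floor_div_one_sub_two_mul_sub_mem (hγ : 0 < 1 - 2 * α) {m : ℤ}
    (h : ⌊((m : ℝ) + 2) * α⌋ = ⌊(m : ℝ) * α⌋) :
    ⌊((m - 2 * ⌊(m : ℝ) * α⌋ : ℤ) : ℝ) / (1 - 2 * α)⌋ - m ∈ ({0, 1} : Set ℤ) := by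
  have hlo : (⌊(m : ℝ) * α⌋ : ℝ) ≤ m * α := Int.floor_le _
  have hhi : ((m : ℝ) + 2) * α < ⌊(m : ℝ) * α⌋ + 1 := h ▸ Int.lt_floor_add_one _
  have hge : m ≤ ⌊((m - 2 * ⌊(m : ℝ) * α⌋ : ℤ) : ℝ) / (1 - 2 * α)⌋ := by
    rw [Int.le_floor, le_div_iff₀ hγ]
    push_cast
    linarith
  have hlt : ⌊((m - 2 * ⌊(m : ℝ) * α⌋ : ℤ) : ℝ) / (1 - 2 * α)⌋ < m + 2 := by
    rw [Int.floor_lt, div_lt_iff₀ hγ]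
    push_cast
    linarith
  simp only [Set.mem_insert_iff, Set.mem_singleton_iff]
  omega

end Beatty

theorem equal_density_gamma_error_general (α γ : ℝ)
    (hirra : Irrational α)
    (ha : 0 < α) (hc : 0 < γ) (hsum : 2 * α + γ = 1)
    (Btβ : Set ℤ) (hBtβ : Btβ = {m : ℤ | ∃ n : ℕ, 0 < n ∧ m = ⌊(n : ℝ) / α⌋ - 1})
    (Btγ : Set ℤ) (hBtγ : Btγ = {m : ℤ | 0 < m ∧ m ∉ beatty α ∧ m ∉ Btβ})
    (ct : ℕ → ℤ)
    (hmono : ∀ n m : ℕ, 0 < n → n < m → ct n < ct m)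
    (hmem : ∀ n : ℕ, 0 < n → ct n ∈ Btγ)
    (hsurj : ∀ x ∈ Btγ, ∃ n : ℕ, 0 < n ∧ ct n = x) :
    ∀ n : ℕ, 0 < n → ⌊(n : ℝ) / γ⌋ - ct n ∈ ({0, 1} : Set ℤ) := by
  intro n hn
  obtain rfl : γ = 1 - 2 * α := by linarith
  obtain rfl : Btγ = beattyGap α := by
    subst hBtγ hBtβ
    simp only [beattyGap, beatty, Set.mem_ofPred_eq, eq_sub_iff_add_eq]
  have hcount : countLe (beattyGap α) (ct n) = n :=
    countLe_apply_of_enumeration (fun _ hx => hx.1) (fun a ha b _ hab => hmono a b ha hab) hmem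
      hsurj hn
  have hn_eq : (n : ℤ) = ct n - 2 * ⌊(ct n : ℝ) * α⌋ := by
    rw [← countLe_beattyGap_of_mem ha (by linarith) hirra (hmem n hn), hcount]
  have hfloor := ((mem_beattyGap_iff ha hirra).1 (hmem n hn)).2
  rw [← Int.cast_natCast, hn_eq]
  exact floor_div_one_sub_two_mul_sub_mem hc hfloor

theorem equal_density_gamma_error (α γ : ℝ)
    (hirra : Irrational α) (hirrc : Irrational γ)
    (ha : 0 < α) (hc : 0 < γ) (hsum : 2 * α + γ = 1)
    (Btβ : Set ℤ) (hBtβ : Btβ = {m : ℤ | ∃ n : ℕ, 0 < n ∧ m = ⌊(n : ℝ) / α⌋ - 1})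
    (Btγ : Set ℤ) (hBtγ : Btγ = {m : ℤ | 0 < m ∧ m ∉ beatty α ∧ m ∉ Btβ})
    (ct : ℕ → ℤ)
    (hmono : ∀ n m : ℕ, 0 < n → n < m → ct n < ct m)
    (hmem : ∀ n : ℕ, 0 < n → ct n ∈ Btγ)
    (hsurj : ∀ x ∈ Btγ, ∃ n : ℕ, 0 < n ∧ ct n = x) :
    ∀ n : ℕ, 0 < n → ⌊(n : ℝ) / γ⌋ - ct n ∈ ({0, 1} : Set ℤ) :=
  equal_density_gamma_error_general α γ hirra ha hc hsum Btβ hBtβ Btγ hBtγ ct hmono hmem hsurj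
end

section
/- Let α, β, γ be positive irrational numbers with α + β + γ = 1 such that the Beatty sequences B_α and B_β are disjoint, i.e., rα + sβ = 1 for some positive integers r, s. Let B̃_γ = ℕ \ (B_α ∪ B_β) with increasing enumeration (c̃(n)). Then for all n, 0 ≤ c(n) - c̃(n) ≤ max(⌊(2-α)/(1-α)⌋, ⌊(2-β)/(1-β)⌋), where c(n) = ⌊n/γ⌋. -/
/-!
Put m = c̃(n) and let u, v be the fractional parts of (m + 1)α and (m + 1)β. Since B_α has
exactly ⌊(m + 1)α⌋ elements in [1, m] and B_α, B_β are disjoint,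
n = m - ⌊(m + 1)α⌋ - ⌊(m + 1)β⌋, that is n/γ = m + ((u - α) + (v - β))/γ. A positive integer m
lies in B_α iff u < α, so u ≥ α and v ≥ β: this is the lower bound. As rα + sβ = 1, the number
r(1 - u) + s(1 - v) is a positive integer, hence at least 1; for r ≤ s this gives
s(2 - u - v) ≥ 1 ≥ sβ/(1 - α), i.e. (u - α) + (v - β) ≤ γ(2 - α)/(1 - α).
-/

open scoped Classical

theorem Int.floor_lt_floor_add_iff_fract_lt {R : Type*} [Ring R] [LinearOrder R]
    [IsStrictOrderedRing R] [FloorRing R] (x a : R) :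
    ⌊x⌋ < ⌊x + a⌋ ↔ Int.fract (x + a) < a := by
  rw [← not_le, ← not_le, Int.le_floor, Int.fract, le_sub_iff_add_le, add_comm a,
    add_le_add_iff_right]

theorem Irrational.fract_pos {x : ℝ} (hx : Irrational x) : 0 < Int.fract x :=
  (Int.fract_nonneg x).lt_of_ne' <| Int.fract_ne_zero_iff.2 fun ⟨z, hz⟩ => hx.ne_int z hz.symm

section Beatty

variable {α : ℝ}

theorem beatty_eq_image : beatty α = (fun j : ℤ => ⌊(j : ℝ) / α⌋) '' Set.Ioi 0 := by
  ext m
  constructor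
  · rintro ⟨n, hn, rfl⟩
    exact ⟨n, Set.mem_Ioi.2 (by exact_mod_cast hn), by simp⟩
  · rintro ⟨j, hj, rfl⟩
    have hj' : ((j.toNat : ℕ) : ℝ) = j := by exact_mod_cast Int.toNat_of_nonneg (le_of_lt hj)
    exact ⟨j.toNat, by simpa using hj, by rw [hj']⟩

theorem pos_of_mem_beatty (h0 : 0 < α) (h1 : α ≤ 1) {m : ℤ} (hm : m ∈ beatty α) : 0 < m := by
  obtain ⟨n, hn, rfl⟩ := hm
  have hn' : (1 : ℝ) ≤ n := by exact_mod_cast hn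
  exact Int.floor_pos.2 <| (le_div_iff₀ h0).2 (by linarith)

theorem strictMono_floor_div (h0 : 0 < α) (h1 : α ≤ 1) :
    StrictMono fun j : ℤ => ⌊(j : ℝ) / α⌋ := by
  refine strictMono_int_of_lt_succ fun j => ?_
  have hα : 1 ≤ 1 / α := (le_div_iff₀ h0).2 (by linarith)
  calc ⌊(j : ℝ) / α⌋ < ⌊(j : ℝ) / α + 1⌋ := by rw [Int.floor_add_one]; exact lt_add_one _
    _ ≤ ⌊((j + 1 : ℤ) : ℝ) / α⌋ :=
      Int.floor_mono (by rw [Int.cast_add, Int.cast_one, add_div]; linarith)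

theorem floor_div_lt_iff_le_floor_mul (hα : Irrational α) (h0 : 0 < α) {M : ℤ} (hM : M ≠ 0)
    (j : ℤ) :
    ⌊(j : ℝ) / α⌋ < M ↔ j ≤ ⌊(M : ℝ) * α⌋ := by
  rw [Int.floor_lt, div_lt_iff₀ h0, Int.le_floor]
  exact ⟨le_of_lt, fun h => h.lt_of_ne ((hα.intCast_mul hM).ne_int j).symm⟩

theorem floor_div_eq_iff (hα : Irrational α) (h0 : 0 < α) {m : ℤ} (hm : 0 < m) (j : ℤ) :
    ⌊(j : ℝ) / α⌋ = m ↔ ⌊(m : ℝ) * α⌋ < j ∧ j ≤ ⌊((m : ℝ) + 1) * α⌋ := by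
  have hlt := floor_div_lt_iff_le_floor_mul hα h0 (M := m + 1) (by omega) j
  push_cast at hlt
  rw [← hlt, ← not_le, ← floor_div_lt_iff_le_floor_mul hα h0 hm.ne', not_lt]
  omega

theorem mem_beatty_iff_floor_lt_floor (hα : Irrational α) (h0 : 0 < α) {m : ℤ} (hm : 0 < m) :
    m ∈ beatty α ↔ ⌊(m : ℝ) * α⌋ < ⌊((m : ℝ) + 1) * α⌋ := by
  simp only [beatty_eq_image, Set.mem_image, Set.mem_Ioi, floor_div_eq_iff hα h0 hm]
  refine ⟨fun ⟨j, _, hj, hj'⟩ => hj.trans_le hj', fun h => ⟨_, ?_, h, le_rfl⟩⟩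
  have : 0 ≤ ⌊(m : ℝ) * α⌋ := Int.floor_nonneg.2 (by positivity)
  omega

theorem mem_beatty_iff_fract_lt (hα : Irrational α) (h0 : 0 < α) {m : ℤ} (hm : 0 < m) :
    m ∈ beatty α ↔ Int.fract (((m : ℝ) + 1) * α) < α := by
  rw [mem_beatty_iff_floor_lt_floor hα h0 hm, add_one_mul, Int.floor_lt_floor_add_iff_fract_lt]

theorem countLe_beatty (hα : Irrational α) (h0 : 0 < α) (h1 : α < 1) {m : ℤ} (hm : 0 ≤ m) :
    (countLe (beatty α) m : ℤ) = ⌊((m : ℝ) + 1) * α⌋ := by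
  have himage : (Finset.Icc 1 m).filter (· ∈ beatty α) =
      (Finset.Icc 1 ⌊((m : ℝ) + 1) * α⌋).image fun j : ℤ => ⌊(j : ℝ) / α⌋ := by
    ext k
    have hlt := floor_div_lt_iff_le_floor_mul hα h0 (M := m + 1) (by omega)
    push_cast at hlt
    simp only [Finset.mem_filter, Finset.mem_Icc, Finset.mem_image, beatty_eq_image, Set.mem_image,
      Set.mem_Ioi]
    constructor
    · rintro ⟨⟨-, hkm⟩, j, hj, rfl⟩
      exact ⟨j, ⟨hj, (hlt j).1 (by omega)⟩, rfl⟩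
    · rintro ⟨j, ⟨hj, hjm⟩, rfl⟩
      have hpos := pos_of_mem_beatty h0 h1.le (by rw [beatty_eq_image]; exact ⟨j, hj, rfl⟩)
      exact ⟨⟨hpos, by have := (hlt j).2 hjm; omega⟩, j, hj, rfl⟩
  have hnonneg : 0 ≤ ⌊((m : ℝ) + 1) * α⌋ := Int.floor_nonneg.2 (by positivity)
  rw [countLe, himage, Finset.card_image_of_injective _ (strictMono_floor_div h0 h1.le).injective,
    Int.card_Icc, Int.toNat_of_nonneg] <;> omega

end Beatty

section Counting

variable {S : Set ℤ}

theorem countLe_enum_eq {ct : ℕ → ℤ} (hpos : ∀ x ∈ S, 0 < x)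
    (hmono : ∀ n m : ℕ, 0 < n → n < m → ct n < ct m) (hmem : ∀ n : ℕ, 0 < n → ct n ∈ S)
    (hsurj : ∀ x ∈ S, ∃ n : ℕ, 0 < n ∧ ct n = x) {n : ℕ} (hn : 0 < n) :
    countLe S (ct n) = n := by
  have hsm : StrictMonoOn ct (Set.Ici 1) := fun a ha b _ hab => hmono a b ha hab
  have himage : (Finset.Icc 1 (ct n)).filter (· ∈ S) = (Finset.Icc 1 n).image ct := by
    ext x
    simp only [Finset.mem_filter, Finset.mem_Icc, Finset.mem_image]
    constructor
    · rintro ⟨⟨-, hx⟩, hxS⟩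
      obtain ⟨k, hk, rfl⟩ := hsurj x hxS
      exact ⟨k, ⟨hk, (hsm.le_iff_le hk hn).1 hx⟩, rfl⟩
    · rintro ⟨k, ⟨hk, hkn⟩, rfl⟩
      exact ⟨⟨hpos _ (hmem k hk), (hsm.le_iff_le hk hn).2 hkn⟩, hmem k hk⟩
  have hinj : Set.InjOn ct (Finset.Icc 1 n) := hsm.injOn.mono fun k hk => (Finset.mem_Icc.1 hk).1
  rw [countLe, himage, Finset.card_image_of_injOn hinj, Nat.card_Icc, Nat.add_sub_cancel]

theorem countLe_add_countLe_add_countLe {A B : Set ℤ} (hAB : Disjoint A B)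
    (hS : ∀ k, 0 < k → (k ∈ S ↔ k ∉ A ∧ k ∉ B)) {m : ℤ} (hm : 0 ≤ m) :
    (countLe S m : ℤ) + countLe A m + countLe B m = m := by
  have hcompl : (Finset.Icc 1 m).filter (· ∉ S) =
      (Finset.Icc 1 m).filter (· ∈ A) ∪ (Finset.Icc 1 m).filter (· ∈ B) := by
    ext k
    simp only [Finset.mem_filter, Finset.mem_union, Finset.mem_Icc, ← and_or_left]
    refine and_congr_right fun hk => ?_
    rw [hS k (by omega)]
    tauto
  have hsplit := Finset.card_filter_add_card_filter_not (s := Finset.Icc 1 m) (· ∈ S)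
  rw [hcompl, Finset.card_union_of_disjoint
    (Finset.disjoint_filter.2 fun _ _ hA => Set.disjoint_left.1 hAB hA), Int.card_Icc,
    add_sub_cancel_right] at hsplit
  simp only [countLe]
  omega

end Counting

theorem exists_natCast_mul_fract_add_natCast_mul_fract_eq {α β : ℝ} {r s : ℕ}
    (hrs : (r : ℝ) * α + s * β = 1) (k : ℤ) :
    ∃ t : ℤ, (r : ℝ) * Int.fract (k * α) + s * Int.fract (k * β) = t :=
  ⟨k - r * ⌊(k : ℝ) * α⌋ - s * ⌊(k : ℝ) * β⌋, by
    push_cast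
    rw [Int.fract, Int.fract]
    linear_combination (k : ℝ) * hrs⟩

theorem one_le_natCast_mul_one_sub_fract_add {α β : ℝ} {r s : ℕ} (hr : 0 < r)
    (hrs : (r : ℝ) * α + s * β = 1) (k : ℤ) :
    1 ≤ (r : ℝ) * (1 - Int.fract (k * α)) + s * (1 - Int.fract (k * β)) := by
  obtain ⟨t, ht⟩ := exists_natCast_mul_fract_add_natCast_mul_fract_eq hrs k
  have hpos : 0 < (r : ℝ) * (1 - Int.fract (k * α)) + s * (1 - Int.fract (k * β)) := by
    have := mul_pos (by positivity : (0 : ℝ) < r) (sub_pos.2 (Int.fract_lt_one ((k : ℝ) * α)))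
    have := Int.fract_lt_one ((k : ℝ) * β)
    positivity
  have hcast : (r : ℝ) * (1 - Int.fract (k * α)) + s * (1 - Int.fract (k * β)) =
      ((r + s - t : ℤ) : ℝ) := by
    push_cast
    linear_combination -ht
  rw [hcast] at hpos ⊢
  exact_mod_cast Int.cast_pos.1 hpos

theorem disjoint_beatty {α β : ℝ} (hα : Irrational α) (hβ : Irrational β) (h0α : 0 < α)
    (h0β : 0 < β) {r s : ℕ} (hr : 0 < r) (hrs : (r : ℝ) * α + s * β = 1) :
    Disjoint (beatty α) (beatty β) := by
  have hα1 : α ≤ 1 := by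
    have := le_mul_of_one_le_left h0α.le (by exact_mod_cast hr : (1 : ℝ) ≤ r)
    have : (0 : ℝ) ≤ s * β := by positivity
    linarith
  refine Set.disjoint_left.2 fun m hmα hmβ => ?_
  have hm := pos_of_mem_beatty h0α hα1 hmα
  rw [mem_beatty_iff_fract_lt hα h0α hm] at hmα
  rw [mem_beatty_iff_fract_lt hβ h0β hm] at hmβ
  obtain ⟨t, ht⟩ := exists_natCast_mul_fract_add_natCast_mul_fract_eq hrs (m + 1)
  push_cast at ht
  have hu : 0 < Int.fract (((m : ℝ) + 1) * α) := by
    have := (hα.intCast_mul (m := m + 1) (by omega)).fract_pos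
    push_cast at this
    exact this
  have ht0 : (0 : ℝ) < t := by
    rw [← ht]
    have := mul_pos (by positivity : (0 : ℝ) < r) hu
    positivity
  have ht1 : (t : ℝ) < 1 := by
    rw [← ht]
    linarith [mul_lt_mul_of_pos_left hmα (by positivity : (0 : ℝ) < r),
      mul_le_mul_of_nonneg_left hmβ.le (Nat.cast_nonneg s : (0 : ℝ) ≤ s)]
  have : 0 < t := by exact_mod_cast ht0
  have : t < 1 := by exact_mod_cast ht1
  omega

theorem sub_add_sub_div_le {α β γ u v r s : ℝ} (h0α : 0 < α) (h0β : 0 < β) (hγ : 0 < γ)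
    (hsum : α + β + γ = 1) (hr : 1 ≤ r) (hrs_le : r ≤ s) (hrs : r * α + s * β = 1) (hu : u ≤ 1)
    (h : 1 ≤ r * (1 - u) + s * (1 - v)) :
    ((u - α) + (v - β)) / γ ≤ (2 - α) / (1 - α) := by
  have hα1 : 0 < 1 - α := by linarith
  have hs : 0 < s := by linarith
  have hsP : 1 ≤ s * ((1 - u) + (1 - v)) := by
    nlinarith [mul_le_mul_of_nonneg_right hrs_le (sub_nonneg.2 hu)]
  have hsβ : s * β ≤ 1 - α := by nlinarith
  rw [div_le_div_iff₀ hγ hα1]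
  refine le_of_mul_le_mul_left ?_ hs
  obtain rfl : γ = 1 - α - β := by linarith
  nlinarith [mul_le_mul_of_nonneg_right hsP hα1.le]

theorem sub_add_sub_div_le_max {α β γ u v r s : ℝ} (h0α : 0 < α) (h0β : 0 < β) (hγ : 0 < γ)
    (hsum : α + β + γ = 1) (hr : 1 ≤ r) (hs : 1 ≤ s) (hrs : r * α + s * β = 1) (hu : u ≤ 1)
    (hv : v ≤ 1) (h : 1 ≤ r * (1 - u) + s * (1 - v)) :
    ((u - α) + (v - β)) / γ ≤ max ((2 - α) / (1 - α)) ((2 - β) / (1 - β)) := by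
  rcases le_total r s with hrs_le | hsr_le
  · exact (sub_add_sub_div_le h0α h0β hγ hsum hr hrs_le hrs hu h).trans (le_max_left _ _)
  · rw [add_comm (u - α)]
    refine (sub_add_sub_div_le h0β h0α hγ (by linarith) hs hsr_le (by linarith) hv
      (by linarith)).trans (le_max_right _ _)

theorem div_eq_add_fract_sub_add_fract_sub {α β γ : ℝ} (hγ : γ ≠ 0) (hsum : α + β + γ = 1)
    {n : ℕ} {m : ℤ} (h : n + ⌊((m : ℝ) + 1) * α⌋ + ⌊((m : ℝ) + 1) * β⌋ = m) :
    (n : ℝ) / γ = m + ((Int.fract (((m : ℝ) + 1) * α) - α) +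
      (Int.fract (((m : ℝ) + 1) * β) - β)) / γ := by
  have hn : (n : ℝ) = m - ⌊((m : ℝ) + 1) * α⌋ - ⌊((m : ℝ) + 1) * β⌋ := by
    exact_mod_cast (by omega : (n : ℤ) = m - ⌊((m : ℝ) + 1) * α⌋ - ⌊((m : ℝ) + 1) * β⌋)
  rw [add_div_eq_mul_add_div _ _ hγ, hn, Int.fract, Int.fract]
  congr 1
  linear_combination (-(m : ℝ)) * hsum

theorem thm1_error_bounds_general (α β γ : ℝ)
    (hirra : Irrational α) (hirrb : Irrational β)
    (ha : 0 < α) (hb : 0 < β) (hc : 0 < γ) (hsum : α + β + γ = 1)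
    (hdisj : ∃ r s : ℕ, 0 < r ∧ 0 < s ∧ (r : ℝ) * α + (s : ℝ) * β = 1)
    (Btγ : Set ℤ) (hBtγ : Btγ = {m : ℤ | 0 < m ∧ m ∉ beatty α ∧ m ∉ beatty β})
    (ct : ℕ → ℤ)
    (hmono : ∀ n m : ℕ, 0 < n → n < m → ct n < ct m)
    (hmem : ∀ n : ℕ, 0 < n → ct n ∈ Btγ)
    (hsurj : ∀ x ∈ Btγ, ∃ n : ℕ, 0 < n ∧ ct n = x) :
    ∀ n : ℕ, 0 < n →
      0 ≤ ⌊(n : ℝ) / γ⌋ - ct n ∧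
      ⌊(n : ℝ) / γ⌋ - ct n ≤ max ⌊(2 - α) / (1 - α)⌋ ⌊(2 - β) / (1 - β)⌋ := by
  intro n hn
  obtain ⟨r, s, hr, hs, hrs⟩ := hdisj
  subst hBtγ
  obtain ⟨hm, hmα, hmβ⟩ := hmem n hn
  set m := ct n
  have hcount : (n : ℤ) + ⌊((m : ℝ) + 1) * α⌋ + ⌊((m : ℝ) + 1) * β⌋ = m := by
    rw [← countLe_enum_eq (fun x hx => hx.1) hmono hmem hsurj hn,
      ← countLe_beatty hirra ha (by linarith) hm.le, ← countLe_beatty hirrb hb (by linarith) hm.le]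
    exact countLe_add_countLe_add_countLe (disjoint_beatty hirra hirrb ha hb hr hrs)
      (fun k hk => ⟨And.right, And.intro hk⟩) hm.le
  have hαu := not_lt.1 ((mem_beatty_iff_fract_lt hirra ha hm).not.1 hmα)
  have hβv := not_lt.1 ((mem_beatty_iff_fract_lt hirrb hb hm).not.1 hmβ)
  have hint := one_le_natCast_mul_one_sub_fract_add hr hrs (m + 1)
  push_cast at hint
  rw [div_eq_add_fract_sub_add_fract_sub hc.ne' hsum hcount, Int.floor_intCast_add,
    add_sub_cancel_left, ← Int.floor_mono.map_max]
  exact ⟨Int.floor_nonneg.2 (div_nonneg (by linarith) hc.le),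
    Int.floor_mono (sub_add_sub_div_le_max ha hb hc hsum (by exact_mod_cast hr)
      (by exact_mod_cast hs) hrs (Int.fract_lt_one _).le (Int.fract_lt_one _).le hint)⟩

theorem thm1_error_bounds (α β γ : ℝ)
    (hirra : Irrational α) (hirrb : Irrational β) (hirrc : Irrational γ)
    (ha : 0 < α) (hb : 0 < β) (hc : 0 < γ) (hsum : α + β + γ = 1)
    (hdisj : ∃ r s : ℕ, 0 < r ∧ 0 < s ∧ (r : ℝ) * α + (s : ℝ) * β = 1)
    (Btγ : Set ℤ) (hBtγ : Btγ = {m : ℤ | 0 < m ∧ m ∉ beatty α ∧ m ∉ beatty β})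
    (ct : ℕ → ℤ)
    (hmono : ∀ n m : ℕ, 0 < n → n < m → ct n < ct m)
    (hmem : ∀ n : ℕ, 0 < n → ct n ∈ Btγ)
    (hsurj : ∀ x ∈ Btγ, ∃ n : ℕ, 0 < n ∧ ct n = x) :
    ∀ n : ℕ, 0 < n →
      0 ≤ ⌊(n : ℝ) / γ⌋ - ct n ∧
      ⌊(n : ℝ) / γ⌋ - ct n ≤ max ⌊(2 - α) / (1 - α)⌋ ⌊(2 - β) / (1 - β)⌋ :=
  thm1_error_bounds_general α β γ hirra hirrb ha hb hc hsum hdisj Btγ hBtγ ct hmono hmem hsurj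
end
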